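/- arXiv:1609.08973 — 3 statements merged into one kernel-verified Lean document; each statement's English description precedes it below -/
import Mathlib

section
/- Let A : ℝ^n → ℝ^n be continuous, B : ℝ^n ⇉ ℝ^n maximal monotone, β > 0, δ ∈ (0,1), θ ∈ (0,1), and x a point with J := (I + βB)^{-1}(x − βA(x)) ≠ x. Suppose that for every j ≥ 0 there exists u_j ∈ B(θ^j J + (1−θ^j)x) with ‖u_j‖ ≤ R such that ⟨A(θ^j J + (1−θ^j)x) + u_j, x − J⟩ < (δ/β)‖x − J‖², and the u_j have a cluster point. Then x = J, a contradiction; i.e., the Armijo-type line search terminates in finitely many steps: there exist j ≥ 0 and u ∈ B(θ^j J + (1−θ^j)x) ∩ B[0,R] with ⟨A(θ^j J + (1−θ^j)x) + u, x − J⟩ ≥ (δ/β)‖x − J‖². -/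
/-! If the line search never stopped, the trial points `θʲJ + (1−θʲ)x` would tend to `x`, and
the bounded selections `uⱼ ∈ B(θʲJ + (1−θʲ)x)` would have a cluster point `a`, which lies in
`B x` because the graph of a maximal monotone operator is closed. Passing to the limit in the
failed Armijo tests gives `β⟪A x + a, x − J⟫ ≤ δ‖x − J‖²`, whereas the resolvent identity and
monotonicity of `B` give `‖x − J‖² ≤ β⟪A x + a, x − J⟫`; since `δ < 1` this forces `x = J`. -/

open RealInnerProductSpace

/-- `B` is a monotone set-valued operator. -/
def MonotoneOp {n : ℕ} (B : EuclideanSpace ℝ (Fin n) → Set (EuclideanSpace ℝ (Fin n))) : Prop :=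
  ∀ x y u v, u ∈ B x → v ∈ B y → 0 ≤ ⟪x - y, u - v⟫

/-- `B` is a maximal monotone set-valued operator. -/
def MaximalMonotoneOp {n : ℕ}
    (B : EuclideanSpace ℝ (Fin n) → Set (EuclideanSpace ℝ (Fin n))) : Prop :=
  MonotoneOp B ∧ ∀ x u, (∀ y v, v ∈ B y → 0 ≤ ⟪x - y, u - v⟫) → u ∈ B x

open Filter Topology

variable {n : ℕ} {B : EuclideanSpace ℝ (Fin n) → Set (EuclideanSpace ℝ (Fin n))}

theorem MaximalMonotoneOp.mem_of_tendsto {ι : Type*} {l : Filter ι} [l.NeBot]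
    (hB : MaximalMonotoneOp B) {y u : ι → EuclideanSpace ℝ (Fin n)} {x a : EuclideanSpace ℝ (Fin n)}
    (hy : Tendsto y l (𝓝 x)) (hu : Tendsto u l (𝓝 a)) (huB : ∀ i, u i ∈ B (y i)) :
    a ∈ B x :=
  hB.2 x a fun z w hw =>
    ge_of_tendsto ((hy.sub_const z).inner (hu.sub_const w))
      (Eventually.of_forall fun i => hB.1 _ _ _ _ (huB i) hw)

theorem MaximalMonotoneOp.exists_mem_subseq_tendsto (hB : MaximalMonotoneOp B) {R : ℝ}
    {y u : ℕ → EuclideanSpace ℝ (Fin n)} {x : EuclideanSpace ℝ (Fin n)}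
    (hy : Tendsto y atTop (𝓝 x)) (huB : ∀ j, u j ∈ B (y j))
    (huR : ∀ j, u j ∈ Metric.closedBall 0 R) :
    ∃ a ∈ B x, ∃ φ : ℕ → ℕ, StrictMono φ ∧ Tendsto (u ∘ φ) atTop (𝓝 a) := by
  obtain ⟨a, -, φ, hφ, hua⟩ := (isCompact_closedBall _ R).tendsto_subseq huR
  exact ⟨a, hB.mem_of_tendsto (hy.comp hφ.tendsto_atTop) hua fun k => huB (φ k), φ, hφ, hua⟩

theorem MonotoneOp.sq_norm_sub_le_inner_of_resolvent (hB : MonotoneOp B)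
    {A : EuclideanSpace ℝ (Fin n) → EuclideanSpace ℝ (Fin n)} {β : ℝ} (hβ : 0 ≤ β)
    {x J v a : EuclideanSpace ℝ (Fin n)} (hv : v ∈ B J) (hres : x - β • A x = J + β • v)
    (ha : a ∈ B x) :
    ‖x - J‖ ^ 2 ≤ β * ⟪A x + a, x - J⟫ := by
  have hβA : β • (A x + a) = (x - J) + β • (a - v) := by
    linear_combination (norm := module) -hres
  have hmono : 0 ≤ ⟪a - v, x - J⟫ := real_inner_comm (x - J) (a - v) ▸ hB x J a v ha hv
  calc ‖x - J‖ ^ 2 ≤ ‖x - J‖ ^ 2 + β * ⟪a - v, x - J⟫ := le_add_of_nonneg_right (by positivity)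
    _ = ⟪β • (A x + a), x - J⟫ := by
      rw [hβA, inner_add_left, real_inner_self_eq_norm_sq, real_inner_smul_left]
    _ = β * ⟪A x + a, x - J⟫ := real_inner_smul_left _ _ _

theorem tendsto_pow_smul_add_one_sub_pow_smul {E : Type*} [NormedAddCommGroup E]
    [NormedSpace ℝ E] {θ : ℝ} (hθ₀ : 0 ≤ θ) (hθ₁ : θ < 1) (J x : E) :
    Tendsto (fun j : ℕ => θ ^ j • J + (1 - θ ^ j) • x) atTop (𝓝 x) := by
  have hθ := tendsto_pow_atTop_nhds_zero_of_lt_one hθ₀ hθ₁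
  simpa using (hθ.smul_const J).add ((tendsto_const_nhds (x := (1 : ℝ))).sub hθ |>.smul_const x)

theorem lineSearch_terminates_general {n : ℕ}
    (A : EuclideanSpace ℝ (Fin n) → EuclideanSpace ℝ (Fin n)) (hA : Continuous A)
    (B : EuclideanSpace ℝ (Fin n) → Set (EuclideanSpace ℝ (Fin n)))
    (hB : MaximalMonotoneOp B)
    (β δ θ R : ℝ) (hβ : 0 < β) (hδ : δ ∈ Set.Ioo (0 : ℝ) 1) (hθ : θ ∈ Set.Ioo (0 : ℝ) 1)
    (x J : EuclideanSpace ℝ (Fin n)) (hJx : J ≠ x)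
    (hres : ∃ v ∈ B J, x - β • A x = J + β • v)
    (hnonempty : ∀ j : ℕ,
      (B (θ ^ j • J + (1 - θ ^ j) • x) ∩ Metric.closedBall 0 R).Nonempty) :
    ∃ j : ℕ, ∃ u ∈ B (θ ^ j • J + (1 - θ ^ j) • x) ∩ Metric.closedBall 0 R,
      (δ / β) * ‖x - J‖ ^ 2 ≤ ⟪A (θ ^ j • J + (1 - θ ^ j) • x) + u, x - J⟫ := by
  by_contra! hfail
  choose u huB huR using hnonempty
  have hy := tendsto_pow_smul_add_one_sub_pow_smul hθ.1.le hθ.2 J x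
  obtain ⟨a, haB, φ, hφ, hua⟩ := hB.exists_mem_subseq_tendsto hy huB huR
  have hlimit : ⟪A x + a, x - J⟫ ≤ δ / β * ‖x - J‖ ^ 2 :=
    le_of_tendsto ((((hA.tendsto x).comp (hy.comp hφ.tendsto_atTop)).add hua).inner
      tendsto_const_nhds) (Eventually.of_forall fun k => (hfail (φ k) (u (φ k)) ⟨huB _, huR _⟩).le)
  obtain ⟨v, hvB, hv⟩ := hres
  have hlower := hB.1.sq_norm_sub_le_inner_of_resolvent hβ.le hvB hv haB
  have hpos : 0 < ‖x - J‖ ^ 2 := by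
    have := norm_pos_iff.mpr (sub_ne_zero.mpr hJx.symm)
    positivity
  have hupper : β * ⟪A x + a, x - J⟫ ≤ δ * ‖x - J‖ ^ 2 := by
    calc β * ⟪A x + a, x - J⟫ ≤ β * (δ / β * ‖x - J‖ ^ 2) := by gcongr
      _ = δ * ‖x - J‖ ^ 2 := by field_simp
  nlinarith [hδ.2]

/-- The Armijo-type line search terminates in finitely many steps: if `J ≠ x` is the
forward-backward point (so `x − βA(x) = J + βv` for some `v ∈ B(J)`), then there exist
`j ≥ 0` and `u ∈ B(θʲJ + (1−θʲ)x) ∩ B[0,R]` with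
`⟨A(θʲJ + (1−θʲ)x) + u, x − J⟩ ≥ (δ/β)‖x − J‖²`. -/
theorem lineSearch_terminates {n : ℕ}
    (A : EuclideanSpace ℝ (Fin n) → EuclideanSpace ℝ (Fin n)) (hA : Continuous A)
    (B : EuclideanSpace ℝ (Fin n) → Set (EuclideanSpace ℝ (Fin n)))
    (hB : MaximalMonotoneOp B)
    (β δ θ R : ℝ) (hβ : 0 < β) (hδ : δ ∈ Set.Ioo (0 : ℝ) 1) (hθ : θ ∈ Set.Ioo (0 : ℝ) 1)
    (hR : 0 < R)
    (x J : EuclideanSpace ℝ (Fin n)) (hJx : J ≠ x)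
    (hres : ∃ v ∈ B J, x - β • A x = J + β • v)
    (hnonempty : ∀ j : ℕ,
      (B (θ ^ j • J + (1 - θ ^ j) • x) ∩ Metric.closedBall 0 R).Nonempty) :
    ∃ j : ℕ, ∃ u ∈ B (θ ^ j • J + (1 - θ ^ j) • x) ∩ Metric.closedBall 0 R,
      (δ / β) * ‖x - J‖ ^ 2 ≤ ⟪A (θ ^ j • J + (1 - θ ^ j) • x) + u, x - J⟫ :=
  lineSearch_terminates_general A hA B hB β δ θ R hβ hδ hθ x J hJx hres hnonempty
end

section
/- Let X and H be nonempty closed convex subsets of ℝ^n with X ∩ H ≠ ∅, and let x ∈ X. If P_X(P_H(x)) = x, then x ∈ H. -/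
/-!
Write `y = P_H x`. Since `x = P_X y`, the variational inequalities of the two projections,
evaluated at a common point `z ∈ X ∩ H`, give `⟪y - x, z - x⟫ ≤ 0` and `⟪x - y, z - y⟫ ≤ 0`.
Their sum is `‖y - x‖²`, so `x = y ∈ H`.
-/

open RealInnerProductSpace

/-- `P` is the metric (orthogonal) projection onto `X`. -/
def IsProjection {n : ℕ} (X : Set (EuclideanSpace ℝ (Fin n)))
    (P : EuclideanSpace ℝ (Fin n) → EuclideanSpace ℝ (Fin n)) : Prop :=
  ∀ x, P x ∈ X ∧ ∀ z ∈ X, ‖P x - x‖ ≤ ‖z - x‖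

section InnerProductSpace

variable {F : Type*} [NormedAddCommGroup F] [InnerProductSpace ℝ F]

theorem real_inner_sub_le_zero_of_forall_norm_le {K : Set F} (hK : Convex ℝ K) {u v : F}
    (hv : v ∈ K) (hmin : ∀ z ∈ K, ‖v - u‖ ≤ ‖z - u‖) :
    ∀ z ∈ K, ⟪u - v, z - v⟫ ≤ 0 := by
  rw [← norm_eq_iInf_iff_real_inner_le_zero hK hv]
  have : Nonempty K := ⟨⟨v, hv⟩⟩
  refine le_antisymm (le_ciInf fun w => ?_) ?_
  · simpa only [norm_sub_rev u] using hmin w w.2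
  · exact ciInf_le ⟨0, by rintro _ ⟨w, rfl⟩; exact norm_nonneg _⟩ (⟨v, hv⟩ : K)

theorem eq_of_real_inner_sub_le_zero {x y z : F}
    (hx : ⟪y - x, z - x⟫ ≤ 0) (hy : ⟪x - y, z - y⟫ ≤ 0) : x = y := by
  have hsum : ⟪y - x, z - x⟫ + ⟪x - y, z - y⟫ = ‖y - x‖ ^ 2 := by
    rw [← neg_sub y x, inner_neg_left, ← sub_eq_add_neg, ← inner_sub_right,
      sub_sub_sub_cancel_left, real_inner_self_eq_norm_sq]
  have hnorm : ‖y - x‖ = 0 := by nlinarith [norm_nonneg (y - x)]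
  exact (sub_eq_zero.mp (norm_eq_zero.mp hnorm)).symm

end InnerProductSpace

theorem IsProjection.real_inner_sub_le_zero {n : ℕ} {X : Set (EuclideanSpace ℝ (Fin n))}
    {P : EuclideanSpace ℝ (Fin n) → EuclideanSpace ℝ (Fin n)} (hP : IsProjection X P)
    (hX : Convex ℝ X) (x : EuclideanSpace ℝ (Fin n)) :
    ∀ z ∈ X, ⟪x - P x, z - P x⟫ ≤ 0 :=
  real_inner_sub_le_zero_of_forall_norm_le hX (hP x).1 (hP x).2

theorem fixedPoint_of_double_projection_mem_general {n : ℕ}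
    (X H : Set (EuclideanSpace ℝ (Fin n)))
    (hXconv : Convex ℝ X)
    (hHconv : Convex ℝ H)
    (hXH : (X ∩ H).Nonempty)
    (PX PH : EuclideanSpace ℝ (Fin n) → EuclideanSpace ℝ (Fin n))
    (hPX : IsProjection X PX) (hPH : IsProjection H PH)
    (x : EuclideanSpace ℝ (Fin n)) (hfix : PX (PH x) = x) :
    x ∈ H := by
  obtain ⟨z, hzX, hzH⟩ := hXH
  have hX : ⟪PH x - x, z - x⟫ ≤ 0 := by
    simpa only [hfix] using hPX.real_inner_sub_le_zero hXconv (PH x) z hzX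
  have hH : ⟪x - PH x, z - PH x⟫ ≤ 0 := hPH.real_inner_sub_le_zero hHconv x z hzH
  rw [eq_of_real_inner_sub_le_zero hX hH]
  exact (hPH x).1

/-- If `X ∩ H ≠ ∅`, `x ∈ X` and `P_X(P_H(x)) = x`, then `x ∈ H`. -/
theorem fixedPoint_of_double_projection_mem {n : ℕ}
    (X H : Set (EuclideanSpace ℝ (Fin n)))
    (hXcl : IsClosed X) (hXconv : Convex ℝ X) (hXne : X.Nonempty)
    (hHcl : IsClosed H) (hHconv : Convex ℝ H) (hHne : H.Nonempty)
    (hXH : (X ∩ H).Nonempty)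
    (PX PH : EuclideanSpace ℝ (Fin n) → EuclideanSpace ℝ (Fin n))
    (hPX : IsProjection X PX) (hPH : IsProjection H PH)
    (x : EuclideanSpace ℝ (Fin n)) (hx : x ∈ X) (hfix : PX (PH x) = x) :
    x ∈ H :=
  fixedPoint_of_double_projection_mem_general X H hXconv hHconv hXH PX PH hPX hPH x hfix
end

section
/- Let A : ℝ^n → ℝ^n continuous, B maximal monotone with closed graph, sequences x^k → x̃, β_k → β̃ ∈ (0, ∞), J^k := (I + β_k B)^{-1}(x^k − β_k A(x^k)) → J̃ := (I + β̃B)^{-1}(x̃ − β̃A(x̃)), y^k := α_k J^k + (1 − α_k) x^k with α_k → 0, and u^k ∈ B(y^k) with u^k → ũ. If ⟨A(y^k) + u^k, x^k − J^k⟩ < (δ/β_k)‖x^k − J^k‖² for all k with δ ∈ (0,1), then in the limit ⟨A(x̃) + ũ, x̃ − J̃⟩ ≤ (δ/β̃)‖x̃ − J̃‖², and combining with the resolvent identity and monotonicity of B yields x̃ = J̃, i.e., 0 ∈ A(x̃) + B(x̃). -/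
open RealInnerProductSpace Filter Topology

/-!
The inequality is the limit of the failed line-search inequalities, since `y^k → x̃` (because
`α_k → 0`) and `B` has closed graph, so `ũ ∈ B(x̃)`. On the other hand the resolvent identity
`x̃ - J̃ = β̃ (A x̃ + ṽ)` with `ṽ ∈ B(J̃)` and monotonicity `⟪x̃ - J̃, ũ - ṽ⟫ ≥ 0` give
`‖x̃ - J̃‖² / β̃ ≤ ⟪A x̃ + ũ, x̃ - J̃⟫`. As `δ < 1`, both bounds force `x̃ = J̃`, and then the
resolvent identity reads `A x̃ + ṽ = 0`.
-/

theorem Filter.Tendsto.smul_add_one_sub_smul_of_tendsto_zero {ι E : Type*} [TopologicalSpace E]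
    [AddCommGroup E] [Module ℝ E] [ContinuousAdd E] [ContinuousSMul ℝ E] {l : Filter ι}
    {α : ι → ℝ} {J x : ι → E} {Jt xt : E} (hα : Tendsto α l (𝓝 0)) (hJ : Tendsto J l (𝓝 Jt))
    (hx : Tendsto x l (𝓝 xt)) :
    Tendsto (fun k => α k • J k + (1 - α k) • x k) l (𝓝 xt) := by
  simpa using (hα.smul hJ).add ((tendsto_const_nhds (x := (1 : ℝ)) |>.sub hα).smul hx)

section Resolvent

variable {E : Type*} [NormedAddCommGroup E] [InnerProductSpace ℝ E] {β : ℝ} {x J a u v : E}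

theorem inv_mul_norm_sq_le_inner_of_resolvent (hβ : β ≠ 0) (hres : x - β • a = J + β • v)
    (hmono : 0 ≤ ⟪x - J, u - v⟫) : β⁻¹ * ‖x - J‖ ^ 2 ≤ ⟪a + u, x - J⟫ := by
  have hav : a + v = β⁻¹ • (x - J) := by
    rw [show x - J = β • (a + v) by linear_combination (norm := module) hres,
      smul_smul, inv_mul_cancel₀ hβ, one_smul]
  have hsplit : ⟪a + u, x - J⟫ = ⟪a + v, x - J⟫ + ⟪u - v, x - J⟫ := by
    rw [← inner_add_left]; congr 1; abel
  rw [hsplit, hav, real_inner_smul_left, real_inner_self_eq_norm_sq, real_inner_comm]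
  linarith

theorem eq_of_resolvent_of_inner_le (hβ : 0 < β) {δ : ℝ} (hδ : δ < 1)
    (hres : x - β • a = J + β • v) (hmono : 0 ≤ ⟪x - J, u - v⟫)
    (hle : ⟪a + u, x - J⟫ ≤ (δ / β) * ‖x - J‖ ^ 2) : x = J := by
  have hlow := inv_mul_norm_sq_le_inner_of_resolvent hβ.ne' hres hmono
  have hgap : 0 < β⁻¹ - δ / β := by
    rw [div_eq_inv_mul, ← mul_one_sub]; exact mul_pos (inv_pos.mpr hβ) (by linarith)
  have hsq : ‖x - J‖ ^ 2 ≤ 0 := by nlinarith [sq_nonneg ‖x - J‖]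
  rw [← sub_eq_zero, ← norm_eq_zero]
  exact pow_eq_zero_iff two_ne_zero |>.mp (le_antisymm hsq (sq_nonneg _))

theorem add_eq_zero_of_resolvent_self (hβ : β ≠ 0) (hres : x - β • a = x + β • v) :
    a + v = 0 := by
  have h : β • (a + v) = 0 := by linear_combination (norm := module) -hres
  exact (smul_eq_zero.mp h).resolve_left hβ

end Resolvent

theorem lineSearch_limit_case_general {n : ℕ}
    (A : EuclideanSpace ℝ (Fin n) → EuclideanSpace ℝ (Fin n)) (hA : Continuous A)
    (B : EuclideanSpace ℝ (Fin n) → Set (EuclideanSpace ℝ (Fin n)))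
    (hB : MaximalMonotoneOp B)
    (hBclosed : ∀ (y u : ℕ → EuclideanSpace ℝ (Fin n)) (yt ut : EuclideanSpace ℝ (Fin n)),
      (∀ k, u k ∈ B (y k)) → Tendsto y atTop (𝓝 yt) → Tendsto u atTop (𝓝 ut) → ut ∈ B yt)
    (δ : ℝ) (hδ : δ ∈ Set.Ioo (0 : ℝ) 1)
    (x Jk y u : ℕ → EuclideanSpace ℝ (Fin n)) (β α : ℕ → ℝ)
    (xt Jt ut : EuclideanSpace ℝ (Fin n)) (βt : ℝ)
    (hβt : 0 < βt)
    (hxk : Tendsto x atTop (𝓝 xt)) (hβk : Tendsto β atTop (𝓝 βt))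
    (hJtres : ∃ v ∈ B Jt, xt - βt • A xt = Jt + βt • v)
    (hJk : Tendsto Jk atTop (𝓝 Jt))
    (hy : ∀ k, y k = α k • Jk k + (1 - α k) • x k)
    (hα : Tendsto α atTop (𝓝 0))
    (hu : ∀ k, u k ∈ B (y k)) (hut : Tendsto u atTop (𝓝 ut))
    (hineq : ∀ k, ⟪A (y k) + u k, x k - Jk k⟫ < (δ / β k) * ‖x k - Jk k‖ ^ 2) :
    (⟪A xt + ut, xt - Jt⟫ ≤ (δ / βt) * ‖xt - Jt‖ ^ 2) ∧
    xt = Jt ∧ ∃ b ∈ B xt, A xt + b = 0 := by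
  have hyk : Tendsto y atTop (𝓝 xt) := by
    rw [funext hy]; exact hα.smul_add_one_sub_smul_of_tendsto_zero hJk hxk
  have hutB : ut ∈ B xt := hBclosed y u xt ut hu hyk hut
  have hlim : ⟪A xt + ut, xt - Jt⟫ ≤ (δ / βt) * ‖xt - Jt‖ ^ 2 :=
    le_of_tendsto_of_tendsto (((hA.tendsto xt).comp hyk).add hut |>.inner (hxk.sub hJk))
      ((tendsto_const_nhds.div hβk hβt.ne').mul ((hxk.sub hJk).norm.pow 2))
      (Eventually.of_forall fun k => (hineq k).le)
  obtain ⟨v, hvB, hres⟩ := hJtres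
  have hxJ : xt = Jt :=
    eq_of_resolvent_of_inner_le hβt hδ.2 hres (hB.1 xt Jt ut v hutB hvB) hlim
  subst hxJ
  exact ⟨hlim, rfl, v, hvB, add_eq_zero_of_resolvent_self hβt.ne' hres⟩

/-- Passing to the limit in the failed line-search inequalities yields a solution:
under the stated convergences, `x̃ = J̃` and `0 ∈ A(x̃) + B(x̃)`. -/
theorem lineSearch_limit_case {n : ℕ}
    (A : EuclideanSpace ℝ (Fin n) → EuclideanSpace ℝ (Fin n)) (hA : Continuous A)
    (B : EuclideanSpace ℝ (Fin n) → Set (EuclideanSpace ℝ (Fin n)))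
    (hB : MaximalMonotoneOp B)
    (hBclosed : ∀ (y u : ℕ → EuclideanSpace ℝ (Fin n)) (yt ut : EuclideanSpace ℝ (Fin n)),
      (∀ k, u k ∈ B (y k)) → Tendsto y atTop (𝓝 yt) → Tendsto u atTop (𝓝 ut) → ut ∈ B yt)
    (δ : ℝ) (hδ : δ ∈ Set.Ioo (0 : ℝ) 1)
    (x Jk y u : ℕ → EuclideanSpace ℝ (Fin n)) (β α : ℕ → ℝ)
    (xt Jt ut : EuclideanSpace ℝ (Fin n)) (βt : ℝ)
    (hβpos : ∀ k, 0 < β k) (hβt : 0 < βt)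
    (hxk : Tendsto x atTop (𝓝 xt)) (hβk : Tendsto β atTop (𝓝 βt))
    (hJres : ∀ k, ∃ v ∈ B (Jk k), x k - β k • A (x k) = Jk k + β k • v)
    (hJtres : ∃ v ∈ B Jt, xt - βt • A xt = Jt + βt • v)
    (hJk : Tendsto Jk atTop (𝓝 Jt))
    (hy : ∀ k, y k = α k • Jk k + (1 - α k) • x k)
    (hα : Tendsto α atTop (𝓝 0))
    (hu : ∀ k, u k ∈ B (y k)) (hut : Tendsto u atTop (𝓝 ut))
    (hineq : ∀ k, ⟪A (y k) + u k, x k - Jk k⟫ < (δ / β k) * ‖x k - Jk k‖ ^ 2) :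
    (⟪A xt + ut, xt - Jt⟫ ≤ (δ / βt) * ‖xt - Jt‖ ^ 2) ∧
    xt = Jt ∧ ∃ b ∈ B xt, A xt + b = 0 :=
  lineSearch_limit_case_general A hA B hB hBclosed δ hδ x Jk y u β α xt Jt ut βt hβt hxk hβk hJtres
    hJk hy hα hu hut hineq
end
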